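/- Let ξ₁ ∈ ℂ with Im ξ₁ ≠ 0, and let (f₁, f₂)ᵀ be a nonvanishing solution of f₁,x = -iξ₁f₁ + ũf₂, f₂,x = -conj(ũ)f₁ + iξ₁f₂ (the spatial Lax system at λ = ξ₁ with potential ũ). Define u = ũ - 2i(ξ₁ - conj(ξ₁))·f₁·conj(f₂)/(|f₁|² + |f₂|²). Then u_x - ũ_x = -2i·Re(ξ₁)·(u - ũ) - (u + ũ)·√(4(Im ξ₁)² - |u - ũ|²). -/

import Mathlib

/-!
Write `P = f₁ f̄₂` and `N = |f₁|² + |f₂|²`. Along the Lax system the potential cancels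
from `N' = 2 Im ξ (|f₁|² - |f₂|²)`, while `P' = -2i Re ξ · P - ũ (|f₁|² - |f₂|²)`. Since
`u - ũ = 4 Im ξ · P / N`, the quotient rule expresses `u_x - ũ_x` through `P / N` and `ũ`,
and eliminating `P / N` in favour of `u - ũ` gives the claimed identity.
-/

open Complex ComplexConjugate

/-- The Darboux-dressed field
`u = ũ - 2i(ξ - ξ̄) f₁ f̄₂ / (|f₁|² + |f₂|²)`. -/
noncomputable def dressed (ξ : ℂ) (v f₁ f₂ : ℝ → ℝ → ℂ) : ℝ → ℝ → ℂ := fun x t =>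
  v x t - 2 * Complex.I * (ξ - (starRingEnd ℂ) ξ) * f₁ x t * (starRingEnd ℂ) (f₂ x t)
    / ((Complex.normSq (f₁ x t) + Complex.normSq (f₂ x t) : ℝ) : ℂ)

lemma ofReal_im_eq_conj_sub_mul_I (z : ℂ) : (z.im : ℂ) = (conj z - z) * I / 2 := by
  rw [← neg_sub, sub_conj]
  push_cast
  linear_combination (z.im : ℂ) * I_mul_I

section LaxSystem

variable {ξ w : ℂ} {g₁ g₂ : ℝ → ℂ} {x : ℝ}

lemma HasDerivAt.ofReal_normSq {f : ℝ → ℂ} {f' : ℂ} (hf : HasDerivAt f f' x) :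
    HasDerivAt (fun y => ((normSq (f y) : ℝ) : ℂ)) (f' * conj (f x) + f x * conj f') x := by
  simp only [← mul_conj]
  exact hf.mul hf.star

lemma hasDerivAt_normSq_add_normSq_of_lax
    (h₁ : HasDerivAt g₁ (-I * ξ * g₁ x + w * g₂ x) x)
    (h₂ : HasDerivAt g₂ (-conj w * g₁ x + I * ξ * g₂ x) x) :
    HasDerivAt (fun y => ((normSq (g₁ y) + normSq (g₂ y) : ℝ) : ℂ))
      ((2 * ξ.im * (normSq (g₁ x) - normSq (g₂ x)) : ℝ) : ℂ) x := by
  push_cast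
  refine (h₁.ofReal_normSq.add h₂.ofReal_normSq).congr_deriv ?_
  simp only [map_add, map_mul, map_neg, conj_conj, conj_I, ← mul_conj,
    ofReal_im_eq_conj_sub_mul_I]
  ring

lemma hasDerivAt_mul_conj_of_lax
    (h₁ : HasDerivAt g₁ (-I * ξ * g₁ x + w * g₂ x) x)
    (h₂ : HasDerivAt g₂ (-conj w * g₁ x + I * ξ * g₂ x) x) :
    HasDerivAt (fun y => g₁ y * conj (g₂ y))
      (-2 * I * (ξ.re : ℂ) * (g₁ x * conj (g₂ x))
        - w * ((normSq (g₁ x) - normSq (g₂ x) : ℝ) : ℂ)) x := by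
  refine (h₁.mul h₂.star).congr_deriv ?_
  push_cast
  simp only [map_add, map_mul, map_neg, conj_conj, conj_I, ← mul_conj, re_eq_add_conj, star_def]
  ring

end LaxSystem

lemma dressed_eq (ξ : ℂ) (v f₁ f₂ : ℝ → ℝ → ℂ) (x t : ℝ) :
    dressed ξ v f₁ f₂ x t = v x t + 4 * ξ.im *
      (f₁ x t * conj (f₂ x t) / ((normSq (f₁ x t) + normSq (f₂ x t) : ℝ) : ℂ)) := by
  rw [dressed, ofReal_im_eq_conj_sub_mul_I]
  ring

lemma hasDerivAt_dressed {ξ vx : ℂ} {v f₁ f₂ : ℝ → ℝ → ℂ} {x t : ℝ}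
    (hpos : 0 < normSq (f₁ x t) + normSq (f₂ x t))
    (hv : HasDerivAt (fun y => v y t) vx x)
    (hf₁ : HasDerivAt (fun y => f₁ y t) (-I * ξ * f₁ x t + v x t * f₂ x t) x)
    (hf₂ : HasDerivAt (fun y => f₂ y t) (-conj (v x t) * f₁ x t + I * ξ * f₂ x t) x) :
    HasDerivAt (fun y => dressed ξ v f₁ f₂ y t)
      (vx - 2 * I * (ξ.re : ℂ) * (dressed ξ v f₁ f₂ x t - v x t)
        - (dressed ξ v f₁ f₂ x t + v x t)
          * ((2 * ξ.im * (normSq (f₁ x t) - normSq (f₂ x t))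
            / (normSq (f₁ x t) + normSq (f₂ x t)) : ℝ) : ℂ)) x := by
  have hN : ((normSq (f₁ x t) + normSq (f₂ x t) : ℝ) : ℂ) ≠ 0 := ofReal_ne_zero.mpr hpos.ne'
  have hP := hasDerivAt_mul_conj_of_lax (g₁ := (f₁ · t)) (g₂ := (f₂ · t)) hf₁ hf₂
  simp only [dressed_eq]
  refine (hv.fun_add ((hP.fun_div (hasDerivAt_normSq_add_normSq_of_lax hf₁ hf₂) hN).const_mul _))
    |>.congr_deriv ?_
  push_cast at hN ⊢
  field_simp
  ring

theorem stmt_16_general (ξ : ℂ) (v vx f₁ f₂ : ℝ → ℝ → ℂ)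
    (hpos : ∀ x t, 0 < Complex.normSq (f₁ x t) + Complex.normSq (f₂ x t))
    (hvx : ∀ x t, HasDerivAt (fun y => v y t) (vx x t) x)
    -- the spatial Lax system at λ = ξ with potential ũ = v
    (hf₁ : ∀ x t, HasDerivAt (fun y => f₁ y t)
      (-Complex.I * ξ * f₁ x t + v x t * f₂ x t) x)
    (hf₂ : ∀ x t, HasDerivAt (fun y => f₂ y t)
      (-(starRingEnd ℂ) (v x t) * f₁ x t + Complex.I * ξ * f₂ x t) x) :
    ∀ x t,
      deriv (fun y => dressed ξ v f₁ f₂ y t) x - vx x t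
        = -2 * Complex.I * ((ξ.re : ℝ) : ℂ) * (dressed ξ v f₁ f₂ x t - v x t)
          - (dressed ξ v f₁ f₂ x t + v x t)
            * ((2 * ξ.im * (Complex.normSq (f₁ x t) - Complex.normSq (f₂ x t))
                / (Complex.normSq (f₁ x t) + Complex.normSq (f₂ x t)) : ℝ) : ℂ) := by
  intro x t
  rw [(hasDerivAt_dressed (hpos x t) (hvx x t) (hf₁ x t) (hf₂ x t)).deriv]
  ring

/-- if `(f₁, f₂)` is a nonvanishing solution of the spatial Lax system at
`λ = ξ₁` with potential `ũ`, then the Darboux-dressed field `u` satisfies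
`u_x - ũ_x = -2i Re(ξ₁)(u - ũ) - (u + ũ)√(4(Im ξ₁)² - |u - ũ|²)`, the square root being
taken with the branch `√(4(Im ξ₁)² - |u-ũ|²) = 2 Im(ξ₁)(|f₁|² - |f₂|²)/(|f₁|² + |f₂|²)`. -/
theorem stmt_16 (ξ : ℂ) (hξ : ξ.im ≠ 0) (v vx f₁ f₂ : ℝ → ℝ → ℂ)
    (hpos : ∀ x t, 0 < Complex.normSq (f₁ x t) + Complex.normSq (f₂ x t))
    (hvx : ∀ x t, HasDerivAt (fun y => v y t) (vx x t) x)
    -- the spatial Lax system at λ = ξ with potential ũ = v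
    (hf₁ : ∀ x t, HasDerivAt (fun y => f₁ y t)
      (-Complex.I * ξ * f₁ x t + v x t * f₂ x t) x)
    (hf₂ : ∀ x t, HasDerivAt (fun y => f₂ y t)
      (-(starRingEnd ℂ) (v x t) * f₁ x t + Complex.I * ξ * f₂ x t) x) :
    ∀ x t,
      deriv (fun y => dressed ξ v f₁ f₂ y t) x - vx x t
        = -2 * Complex.I * ((ξ.re : ℝ) : ℂ) * (dressed ξ v f₁ f₂ x t - v x t)
          - (dressed ξ v f₁ f₂ x t + v x t)
            * ((2 * ξ.im * (Complex.normSq (f₁ x t) - Complex.normSq (f₂ x t))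
                / (Complex.normSq (f₁ x t) + Complex.normSq (f₂ x t)) : ℝ) : ℂ) :=
  stmt_16_general ξ v vx f₁ f₂ hpos hvx hf₁ hf₂
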